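/- For every string w over {m_1, m_2, m_3} there exists a string w' over {m_1, m_2, m_3} such that w ∼ w', |w'|_i = |w|_i for each i ∈ {1,2,3}, and w' contains none of m_1m_3, m_1m_2m_2m_3, m_1m_2m_3m_2 as contiguous substrings. -/

import Mathlib

/-- A configuration ("state") of a system of `k` stacks in series: container `0`
is the input queue (front at the head of the list), containers `1, …, k` are the
stacks (top at the head), and container `k+1` is the output queue (front at the head). -/
abbrev Conf (k : ℕ) : Type := Fin (k + 2) → List ℕ

/-- Apply the move `m_{i+1}` (for `i : Fin (k+1)`): remove the element at the head of
container `i` and move it to container `i+1` (pushed on top if the destination is a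
stack, appended at the back if it is the output queue).  Returns `none` (the illegal
state `∅`) if the source container is empty. -/
def applyMove {k : ℕ} (i : Fin (k + 1)) (s : Conf k) : Option (Conf k) :=
  match s i.castSucc with
  | [] => none
  | x :: rest =>
      some fun j =>
        if j = i.castSucc then rest
        else if j = i.succ then
          (if (j : ℕ) = k + 1 then s j ++ [x] else x :: s j)
        else s j

/-- The action `w ∗ s` of a string of moves on an (optional) state; moves are applied
left to right, and the illegal state `none` is absorbing. -/
def act {k : ℕ} (w : List (Fin (k + 1))) (s : Option (Conf k)) : Option (Conf k) :=
  w.foldl (fun t i => t.bind (applyMove i)) s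

/-- The initial state `I(n,k)`: the input queue holds `1, …, n` (front to back),
and everything else is empty. -/
def initConf (n k : ℕ) : Conf k :=
  fun j => if (j : ℕ) = 0 then List.range' 1 n else []

/-- The final state whose output queue holds `out` (front to back), all else empty. -/
def finalConf (k : ℕ) (out : List ℕ) : Conf k :=
  fun j => if (j : ℕ) = k + 1 then out else []

/-- `π ∈ Sₙ` is generated by `k` stacks in series if some string of moves takes
`I(n,k)` to the final state with output queue `π(1), …, π(n)` (front to back). -/
def Generates (n k : ℕ) (π : Equiv.Perm (Fin n)) : Prop :=
  ∃ w : List (Fin (k + 1)),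
    act w (some (initConf n k)) = some (finalConf k (List.ofFn fun j => (π j : ℕ) + 1))

/-- `P(n,k)`, the set of permutations of `n` elements generated by `k` stacks in series. -/
def GenPerms (n k : ℕ) : Set (Equiv.Perm (Fin n)) := {π | Generates n k π}

/-- `k_n`, the least number of stacks needed to generate (equivalently, sort) every
permutation of `n` elements. -/
noncomputable def kStacks (n : ℕ) : ℕ := sInf {k | ∀ π : Equiv.Perm (Fin n), Generates n k π}

/-- Two move strings are equivalent, `u ∼ v`, if they act identically on every state. -/
def MoveEquiv {k : ℕ} (u v : List (Fin (k + 1))) : Prop :=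
  ∀ s : Conf k, act u (some s) = act v (some s)

lemma cast0' : (Fin.castSucc (0 : Fin 3)) = (0 : Fin 4) := rfl
lemma cast1' : (Fin.castSucc (1 : Fin 3)) = (1 : Fin 4) := rfl
lemma cast2' : (Fin.castSucc (2 : Fin 3)) = (2 : Fin 4) := rfl
lemma succ0' : (Fin.succ (0 : Fin 3)) = (1 : Fin 4) := rfl
lemma succ1' : (Fin.succ (1 : Fin 3)) = (2 : Fin 4) := rfl
lemma succ2' : (Fin.succ (2 : Fin 3)) = (3 : Fin 4) := rfl

set_option maxHeartbeats 1000000 in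
lemma rule1 : MoveEquiv (k := 2) [0, 2] [2, 0] := by
  intro s
  rcases h0 : s 0 with _ | ⟨x, r0⟩ <;> rcases h2 : s 2 with _ | ⟨y, r2⟩ <;>
    simp (config := { decide := true })
      [act, applyMove, h0, h2, cast0', cast1', cast2', succ0', succ1', succ2'] <;>
    (try (funext j; fin_cases j <;>
      simp (config := { decide := true }) [h0, h2]))

set_option maxHeartbeats 1000000 in
lemma rule2 : MoveEquiv (k := 2) [0, 1, 1, 2] [1, 0, 2, 1] := by
  intro s
  rcases h0 : s 0 with _ | ⟨x, r0⟩ <;> rcases h1 : s 1 with _ | ⟨y, r1⟩ <;>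
    simp (config := { decide := true })
      [act, applyMove, h0, h1, cast0', cast1', cast2', succ0', succ1', succ2'] <;>
    (try (funext j; fin_cases j <;>
      simp (config := { decide := true }) [h0, h1]))

set_option maxHeartbeats 1000000 in
lemma rule3 : MoveEquiv (k := 2) [0, 1, 2, 1] [1, 0, 1, 2] := by
  intro s
  rcases h0 : s 0 with _ | ⟨x, r0⟩ <;> rcases h1 : s 1 with _ | ⟨y, r1⟩ <;>
    simp (config := { decide := true })
      [act, applyMove, h0, h1, cast0', cast1', cast2', succ0', succ1', succ2'] <;>
    (try (funext j; fin_cases j <;>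
      simp (config := { decide := true }) [h0, h1]))

lemma act_append {k : ℕ} (u v : List (Fin (k + 1))) (s : Option (Conf k)) :
    act (u ++ v) s = act v (act u s) := List.foldl_append

lemma act_none {k : ℕ} (w : List (Fin (k + 1))) : act w none = none := by
  induction w with
  | nil => rfl
  | cons a w ih => simpa [act] using ih

lemma moveEquiv_context {k : ℕ} {u v : List (Fin (k + 1))} (h : MoveEquiv u v)
    (a b : List (Fin (k + 1))) : MoveEquiv (a ++ u ++ b) (a ++ v ++ b) := by
  intro s
  rw [act_append, act_append, act_append, act_append]
  rcases ha : act a (some s) with _ | s'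
  · simp [act_none]
  · rw [h s']

lemma moveEquiv_trans {k : ℕ} {u v w : List (Fin (k + 1))}
    (h1 : MoveEquiv u v) (h2 : MoveEquiv v w) : MoveEquiv u w :=
  fun s => (h1 s).trans (h2 s)

def mu : List (Fin 3) → ℕ
  | [] => 0
  | x :: xs => mu xs + (if x = 0 then xs.count 1 + xs.count 2 else 0)

lemma mu_append (a b : List (Fin 3)) :
    mu (a ++ b) = mu a + mu b + a.count 0 * (b.count 1 + b.count 2) := by
  induction a with
  | nil => simp [mu]
  | cons x xs ih =>
      by_cases hx : x = 0 <;>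
        simp [mu, ih, hx, List.count_cons] <;> ring

lemma mu_context {p p' : List (Fin 3)} (hc : ∀ i : Fin 3, p'.count i = p.count i)
    (hm : mu p' + 1 = mu p) (a b : List (Fin 3)) :
    mu (a ++ p' ++ b) + 1 = mu (a ++ p ++ b) := by
  rw [mu_append, mu_append, mu_append, mu_append]
  simp only [List.count_append, hc]
  linarith

lemma count_context {p p' : List (Fin 3)} (hc : ∀ i : Fin 3, p'.count i = p.count i)
    (a b : List (Fin 3)) (i : Fin 3) :
    (a ++ p' ++ b).count i = (a ++ p ++ b).count i := by
  simp [List.count_append, hc]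

lemma key : ∀ n (w : List (Fin 3)), mu w < n →
    ∃ w' : List (Fin 3), MoveEquiv (k := 2) w w' ∧
      (∀ i : Fin 3, w'.count i = w.count i) ∧
      ¬ [0, 2] <:+: w' ∧ ¬ [0, 1, 1, 2] <:+: w' ∧ ¬ [0, 1, 2, 1] <:+: w' := by
  intro n
  induction n with
  | zero => intro w hw; omega
  | succ n ih =>
    intro w hw
    by_cases h1 : [0, 2] <:+: w
    · obtain ⟨a, b, hab⟩ := h1
      subst hab
      have hc : ∀ i : Fin 3,
          ([2, 0] : List (Fin 3)).count i = ([0, 2] : List (Fin 3)).count i := by decide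
      have hm : mu [2, 0] + 1 = mu [0, 2] := by decide
      have hmu := mu_context hc hm a b
      obtain ⟨w', he, hcnt, hav⟩ := ih (a ++ [2, 0] ++ b) (by omega)
      exact ⟨w', moveEquiv_trans (moveEquiv_context rule1 a b) he,
        fun i => (hcnt i).trans (count_context hc a b i), hav⟩
    · by_cases h2 : [0, 1, 1, 2] <:+: w
      · obtain ⟨a, b, hab⟩ := h2
        subst hab
        have hc : ∀ i : Fin 3,
            ([1, 0, 2, 1] : List (Fin 3)).count i
              = ([0, 1, 1, 2] : List (Fin 3)).count i := by decide
        have hm : mu [1, 0, 2, 1] + 1 = mu [0, 1, 1, 2] := by decide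
        have hmu := mu_context hc hm a b
        obtain ⟨w', he, hcnt, hav⟩ := ih (a ++ [1, 0, 2, 1] ++ b) (by omega)
        exact ⟨w', moveEquiv_trans (moveEquiv_context rule2 a b) he,
          fun i => (hcnt i).trans (count_context hc a b i), hav⟩
      · by_cases h3 : [0, 1, 2, 1] <:+: w
        · obtain ⟨a, b, hab⟩ := h3
          subst hab
          have hc : ∀ i : Fin 3,
              ([1, 0, 1, 2] : List (Fin 3)).count i
                = ([0, 1, 2, 1] : List (Fin 3)).count i := by decide
          have hm : mu [1, 0, 1, 2] + 1 = mu [0, 1, 2, 1] := by decide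
          have hmu := mu_context hc hm a b
          obtain ⟨w', he, hcnt, hav⟩ := ih (a ++ [1, 0, 1, 2] ++ b) (by omega)
          exact ⟨w', moveEquiv_trans (moveEquiv_context rule3 a b) he,
            fun i => (hcnt i).trans (count_context hc a b i), hav⟩
        · exact ⟨w, fun s => rfl, fun i => rfl, h1, h2, h3⟩

/-- Every string `w` over `{m₁, m₂, m₃}` (encoded as `0, 1, 2 : Fin 3`)
is equivalent to a string `w'` with the same number of occurrences of each move that
avoids the factors `m₁m₃`, `m₁m₂m₂m₃`, `m₁m₂m₃m₂`. -/
theorem rewrite_to_avoiding (w : List (Fin 3)) :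
    ∃ w' : List (Fin 3), MoveEquiv (k := 2) w w' ∧
      (∀ i : Fin 3, w'.count i = w.count i) ∧
      ¬ [0, 2] <:+: w' ∧ ¬ [0, 1, 1, 2] <:+: w' ∧ ¬ [0, 1, 2, 1] <:+: w' := by
  exact key (mu w + 1) w (Nat.lt_succ_self _)
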